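/- arXiv:1302.1999 — 2 statements merged into one kernel-verified Lean document; each statement's English description precedes it below -/
import Mathlib

section
/- The marginal generating function of the number of late customers under any stationary distribution of the exponentially-delayed-arrivals queue is a q-Pochhammer product: for all complex y with |y| ≤ 1, P(1,y) = ∏_{k=0}^{∞} (1 + ρ·q^{k+1}·(y−1)). -/
open scoped BigOperators

noncomputable section

/-- `b j l = C(l,j) p^j q^(l-j)` with `p = 1 - q`, and `b j l = 0` for `j > l`. -/
def binomB (q : ℝ) (j l : ℕ) : ℝ :=
  if j ≤ l then (Nat.choose l j : ℝ) * (1 - q) ^ j * q ^ (l - j) else 0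

/-- Transition kernel of the chain on `ℕ × ℕ`: from `(n, l)` move to
`(max (n-1) 0 + j, l + 1 - j)` with probability `ρ * b j (l+1)` for `0 ≤ j ≤ l + 1`,
and to `(max (n-1) 0 + j, l - j)` with probability `(1 - ρ) * b j l` for `0 ≤ j ≤ l`.
(In `ℕ`, `n - 1` is truncated subtraction, i.e. `max (n-1) 0`.) -/
def kernel (ρ q : ℝ) (s s' : ℕ × ℕ) : ℝ :=
  ρ * ∑ j ∈ Finset.range (s.2 + 2),
        (if s' = (s.1 - 1 + j, s.2 + 1 - j) then binomB q j (s.2 + 1) else 0) +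
    (1 - ρ) * ∑ j ∈ Finset.range (s.2 + 1),
        (if s' = (s.1 - 1 + j, s.2 - j) then binomB q j s.2 else 0)

/-- Bivariate generating function `P(z,y) = Σ_{n,l} P_{n,l} z^n y^l`. -/
def gf (P : ℕ × ℕ → ℝ) (z y : ℂ) : ℂ :=
  ∑' s : ℕ × ℕ, (P s : ℂ) * z ^ s.1 * y ^ s.2

end

/-!
Let `G(x) = P(1, x)`. In one step a new customer joins the late ones with probability `ρ`, and
then each late customer independently stays late with probability `q`, so testing stationarity
against `x ^ l` gives
`G(x) = (1 + ρ q (x - 1)) G(1 + q (x - 1))`. Iterating along `x_n = 1 + q ^ n (y - 1)`, which stays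
in the closed unit disc and tends to `1`, and using `G(x_n) → G(1) = 1` yields the product.
-/

open Filter Topology

lemma binomB_nonneg {q : ℝ} (hq0 : 0 ≤ q) (hq1 : q ≤ 1) (j l : ℕ) : 0 ≤ binomB q j l := by
  have : 0 ≤ 1 - q := by linarith
  unfold binomB
  split_ifs <;> positivity

lemma kernel_nonneg {ρ q : ℝ} (hρ0 : 0 ≤ ρ) (hρ1 : ρ ≤ 1) (hq0 : 0 ≤ q) (hq1 : q ≤ 1)
    (s s' : ℕ × ℕ) : 0 ≤ kernel ρ q s s' := by
  have : 0 ≤ 1 - ρ := by linarith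
  unfold kernel
  refine add_nonneg (mul_nonneg hρ0 ?_) (mul_nonneg this ?_) <;>
    exact Finset.sum_nonneg fun j _ => by split_ifs <;> simp [binomB_nonneg hq0 hq1]

lemma sum_binomB_mul_pow (q : ℝ) (x : ℂ) (m : ℕ) :
    ∑ j ∈ Finset.range (m + 1), (binomB q j m : ℂ) * x ^ (m - j) = (1 + q * (x - 1)) ^ m := by
  rw [show 1 + (q : ℂ) * (x - 1) = (1 - q) + q * x by ring, add_pow]
  refine Finset.sum_congr rfl fun j hj => ?_
  rw [binomB, if_pos (Nat.lt_succ_iff.mp (Finset.mem_range.mp hj))]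
  push_cast
  ring

lemma hasSum_sum_ite_mul {ι α : Type*} [DecidableEq α] (S : Finset ι) (e : ι → α) (c : ι → ℂ)
    (g : α → ℂ) :
    HasSum (fun a => (∑ i ∈ S, if a = e i then c i else 0) * g a) (∑ i ∈ S, c i * g (e i)) := by
  refine (hasSum_sum fun i _ => hasSum_ite_eq (e i) (c i * g (e i))).congr_fun fun a => ?_
  rw [Finset.sum_mul]
  refine Finset.sum_congr rfl fun i _ => ?_
  split_ifs with h <;> simp [h]

lemma hasSum_kernel_mul_pow (ρ q : ℝ) (x : ℂ) (s : ℕ × ℕ) :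
    HasSum (fun s' => (kernel ρ q s s' : ℂ) * x ^ s'.2)
      ((1 + ρ * q * (x - 1)) * (1 + q * (x - 1)) ^ s.2) := by
  have h := ((hasSum_sum_ite_mul (Finset.range (s.2 + 2)) (fun j => (s.1 - 1 + j, s.2 + 1 - j))
      (fun j => (binomB q j (s.2 + 1) : ℂ)) (fun s' => x ^ s'.2)).mul_left (ρ : ℂ)).add
    ((hasSum_sum_ite_mul (Finset.range (s.2 + 1)) (fun j => (s.1 - 1 + j, s.2 - j))
      (fun j => (binomB q j s.2 : ℂ)) (fun s' => x ^ s'.2)).mul_left (1 - ρ : ℂ))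
  simp only [sum_binomB_mul_pow] at h
  rw [show (1 + ρ * q * (x - 1)) * (1 + q * (x - 1)) ^ s.2
      = ρ * (1 + q * (x - 1)) ^ (s.2 + 1) + (1 - ρ) * (1 + q * (x - 1)) ^ s.2 by ring]
  refine h.congr_fun fun s' => ?_
  simp only [kernel]
  push_cast [apply_ite Complex.ofReal]
  ring

lemma hasSum_kernel_one {ρ q : ℝ} (s : ℕ × ℕ) : HasSum (kernel ρ q s) 1 := by
  have h := hasSum_kernel_mul_pow ρ q 1 s
  simp only [one_pow, mul_one, sub_self, mul_zero, add_zero] at h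
  exact Complex.hasSum_ofReal.mp (by simpa using h)

lemma gf_one_apply (P : ℕ × ℕ → ℝ) (x : ℂ) : gf P 1 x = ∑' s, (P s : ℂ) * x ^ s.2 := by
  simp only [gf, one_pow, mul_one]

lemma norm_one_add_mul_sub_one_le {t : ℝ} (ht0 : 0 ≤ t) (ht1 : t ≤ 1) {x : ℂ} (hx : ‖x‖ ≤ 1) :
    ‖1 + t * (x - 1)‖ ≤ 1 :=
  calc ‖1 + t * (x - 1)‖ = ‖((1 - t : ℝ) : ℂ) + t * x‖ := by push_cast; ring_nf
    _ ≤ (1 - t) + t * ‖x‖ := by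
      refine (norm_add_le _ _).trans_eq ?_
      rw [norm_mul, Complex.norm_real, Complex.norm_real, Real.norm_of_nonneg (by linarith),
        Real.norm_of_nonneg ht0]
    _ ≤ 1 := by nlinarith

section Stationary

variable {ρ q : ℝ} {P : ℕ × ℕ → ℝ}

theorem gf_one_eq_mul_gf_one (hρ0 : 0 ≤ ρ) (hρ1 : ρ ≤ 1) (hq0 : 0 ≤ q) (hq1 : q ≤ 1)
    (hP : Summable P) (hstat : ∀ s', ∑' s, P s * kernel ρ q s s' = P s')
    {x : ℂ} (hx : ‖x‖ ≤ 1) :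
    gf P 1 x = (1 + ρ * q * (x - 1)) * gf P 1 (1 + q * (x - 1)) := by
  set F : ℕ × ℕ → ℕ × ℕ → ℂ := fun s s' => P s * kernel ρ q s s' * x ^ s'.2 with hF_def
  have hK : Summable fun ss : (ℕ × ℕ) × (ℕ × ℕ) => ‖P ss.1‖ * kernel ρ q ss.1 ss.2 := by
    rw [summable_prod_of_nonneg fun ss =>
      mul_nonneg (norm_nonneg _) (kernel_nonneg hρ0 hρ1 hq0 hq1 _ _)]
    refine ⟨fun s => ((hasSum_kernel_one (ρ := ρ) (q := q) s).mul_left ‖P s‖).summable, ?_⟩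
    simpa only [((hasSum_kernel_one (ρ := ρ) (q := q) _).mul_left _).tsum_eq, mul_one]
      using hP.norm
  have hF : Summable (Function.uncurry F) := hK.of_norm_bounded fun ss => by
    rw [Function.uncurry_apply_pair, hF_def, norm_mul, norm_mul, norm_pow, Complex.norm_real,
      Complex.norm_real, Real.norm_of_nonneg (kernel_nonneg hρ0 hρ1 hq0 hq1 _ _)]
    exact mul_le_of_le_one_right (mul_nonneg (norm_nonneg _) (kernel_nonneg hρ0 hρ1 hq0 hq1 _ _))
      (pow_le_one₀ (norm_nonneg _) hx)
  calc gf P 1 x = ∑' s', ∑' s, F s s' := by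
        rw [gf_one_apply]
        refine tsum_congr fun s' => ?_
        simp only [hF_def, tsum_mul_right, ← Complex.ofReal_mul, ← Complex.ofReal_tsum, hstat]
    _ = ∑' s, (1 + ρ * q * (x - 1)) * (P s * (1 + q * (x - 1)) ^ s.2) := by
        rw [hF.tsum_comm]
        refine tsum_congr fun s => ?_
        simp only [hF_def, mul_assoc]
        rw [tsum_mul_left, (hasSum_kernel_mul_pow ρ q x s).tsum_eq]
        ring
    _ = (1 + ρ * q * (x - 1)) * gf P 1 (1 + q * (x - 1)) := by rw [tsum_mul_left, gf_one_apply]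

theorem gf_one_eq_prod_mul_gf_one (hρ0 : 0 ≤ ρ) (hρ1 : ρ ≤ 1) (hq0 : 0 ≤ q) (hq1 : q ≤ 1)
    (hP : Summable P) (hstat : ∀ s', ∑' s, P s * kernel ρ q s s' = P s')
    {y : ℂ} (hy : ‖y‖ ≤ 1) (n : ℕ) :
    gf P 1 y = (∏ k ∈ Finset.range n, (1 + ρ * q ^ (k + 1) * (y - 1))) *
      gf P 1 (1 + q ^ n * (y - 1)) := by
  induction n with
  | zero => simp
  | succ n ih =>
    have hxn : ‖1 + (q : ℂ) ^ n * (y - 1)‖ ≤ 1 := by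
      exact_mod_cast norm_one_add_mul_sub_one_le (pow_nonneg hq0 n) (pow_le_one₀ hq0 hq1) hy
    rw [ih, gf_one_eq_mul_gf_one hρ0 hρ1 hq0 hq1 hP hstat hxn, Finset.prod_range_succ,
      show 1 + (q : ℂ) * (1 + q ^ n * (y - 1) - 1) = 1 + q ^ (n + 1) * (y - 1) by ring]
    ring

end Stationary

lemma tendsto_gf_one {ι : Type*} {l : Filter ι} {P : ℕ × ℕ → ℝ} (hP : HasSum P 1)
    {u : ι → ℂ} (hu : Tendsto u l (𝓝 1)) (hu1 : ∀ i, ‖u i‖ ≤ 1) :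
    Tendsto (fun i => gf P 1 (u i)) l (𝓝 1) := by
  have h := tendsto_tsum_of_dominated_convergence (f := fun i s => (P s : ℂ) * u i ^ s.2)
    (g := fun s => (P s : ℂ)) hP.summable.norm
    (fun s => by simpa using (hu.pow s.2).const_mul (P s : ℂ))
    (Eventually.of_forall fun i s => by
      rw [norm_mul, norm_pow, Complex.norm_real]
      exact mul_le_of_le_one_right (norm_nonneg _) (pow_le_one₀ (norm_nonneg _) (hu1 i)))
  rw [← Complex.ofReal_tsum, hP.tsum_eq, Complex.ofReal_one] at h
  simpa only [gf_one_apply] using h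

lemma multipliable_one_add_mul_pow_succ_mul {q : ℂ} (hq : ‖q‖ < 1) (a b : ℂ) :
    Multipliable fun k : ℕ => 1 + a * q ^ (k + 1) * b := by
  apply multipliable_one_add_of_summable
  have h := ((summable_nat_add_iff 1).mpr
    (summable_geometric_of_lt_one (norm_nonneg _) hq)).mul_left (‖a‖ * ‖b‖)
  simpa only [norm_mul, norm_pow, mul_right_comm] using h

theorem stmt2_general (ρ q : ℝ) (hρ : ρ ∈ Set.Ioo (0 : ℝ) 1) (hq : q ∈ Set.Ioo (0 : ℝ) 1)
    (P : ℕ × ℕ → ℝ) (hsum : HasSum P 1)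
    (hstat : ∀ s' : ℕ × ℕ, ∑' s : ℕ × ℕ, P s * kernel ρ q s s' = P s')
    (y : ℂ) (hy : ‖y‖ ≤ 1) :
    gf P 1 y = ∏' k : ℕ, (1 + (ρ : ℂ) * (q : ℂ) ^ (k + 1) * (y - 1)) := by
  obtain ⟨hρ0, hρ1⟩ := hρ
  obtain ⟨hq0, hq1⟩ := hq
  have hq_norm : ‖(q : ℂ)‖ < 1 := by rwa [Complex.norm_real, Real.norm_of_nonneg hq0.le]
  have hx_lim : Tendsto (fun n : ℕ => 1 + (q : ℂ) ^ n * (y - 1)) atTop (𝓝 1) := by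
    simpa using ((tendsto_pow_atTop_nhds_zero_of_norm_lt_one hq_norm).mul_const (y - 1)).const_add 1
  have hx_norm (n : ℕ) : ‖1 + (q : ℂ) ^ n * (y - 1)‖ ≤ 1 := by
    exact_mod_cast norm_one_add_mul_sub_one_le (pow_nonneg hq0.le n) (pow_le_one₀ hq0.le hq1.le) hy
  have hlim := (multipliable_one_add_mul_pow_succ_mul hq_norm (ρ : ℂ) (y - 1)).hasProd
    |>.tendsto_prod_nat.mul (tendsto_gf_one hsum hx_lim hx_norm)
  rw [mul_one] at hlim
  refine tendsto_nhds_unique (tendsto_const_nhds.congr fun n => ?_) hlim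
  exact gf_one_eq_prod_mul_gf_one hρ0.le hρ1.le hq0.le hq1.le hsum.summable hstat hy n

theorem stmt2 (ρ q : ℝ) (hρ : ρ ∈ Set.Ioo (0 : ℝ) 1) (hq : q ∈ Set.Ioo (0 : ℝ) 1)
    (P : ℕ × ℕ → ℝ) (hpos : ∀ s, 0 ≤ P s) (hsum : HasSum P 1)
    (hstat : ∀ s' : ℕ × ℕ, ∑' s : ℕ × ℕ, P s * kernel ρ q s s' = P s')
    (y : ℂ) (hy : ‖y‖ ≤ 1) :
    gf P 1 y = ∏' k : ℕ, (1 + (ρ : ℂ) * (q : ℂ) ^ (k + 1) * (y - 1)) :=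
  stmt2_general ρ q hρ hq P hsum hstat y hy
end

section
/- Under the assumptions on F, the coefficients admit the closed general form: for every k ≥ 1, P^(k)(z,y) = Σ_{j=1}^{k} [ ((y−z)^j / j!)·A_j^k(z) + ((1+ρ(z−1))/(1−ρ))·((z^j − 1)/j!)·A_j^k(0) ], as an identity of polynomials in z and y. -/
open scoped BigOperators

noncomputable section

/-- Polynomials in `z` (outer variable) with coefficients polynomials in `y` (inner variable);
this is the ring in which the coefficients `P^(k)(z,y)` live. -/
abbrev Bzy : Type := Polynomial (Polynomial ℂ)

/-- The variable `y` as an element of `Bzy` (the outer variable `Polynomial.X` is `z`). -/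
def yB : Bzy := Polynomial.C Polynomial.X

/-- A complex constant as an element of `Bzy`. -/
def cB (c : ℂ) : Bzy := Polynomial.C (Polynomial.C c)

/-- The power series `u = z + q (y - z)` in the variable `q`, with coefficients in `Bzy`. -/
def useries : PowerSeries Bzy :=
  PowerSeries.C (R := Bzy) Polynomial.X + PowerSeries.X * PowerSeries.C (R := Bzy) (yB - Polynomial.X)

/-- The inclusion of complex constants into `Bzy[[q]]`. -/
def constHom : ℂ →+* PowerSeries Bzy :=
  (PowerSeries.C (R := Bzy)).comp
    ((Polynomial.C : Polynomial ℂ →+* Bzy).comp (Polynomial.C : ℂ →+* Polynomial ℂ))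

/-- Substitution of `u = z + q(y-z)` for the variable in a polynomial in `y`. -/
def substY : Polynomial ℂ →+* PowerSeries Bzy :=
  Polynomial.eval₂RingHom constHom useries

/-- Substitution `z ↦ z`, `y ↦ u = z + q(y-z)` in a polynomial in `z` and `y`. -/
def substZY : Bzy →+* PowerSeries Bzy :=
  Polynomial.eval₂RingHom substY (PowerSeries.C (R := Bzy) Polynomial.X)

/-- The formal functional equation `z·F(z,y) = (1-ρ+ρu)·[(z-1)·F(0,u) + F(z,u)]`, where
`F = Σ_k q^k P^(k)(z,y)`, `F(0,u)` is obtained by setting `z = 0` (i.e. taking the coefficient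
of `z^0`) and substituting `u` for `y`, and `F(z,u)` by substituting `u` for `y`; the `m`-th
coefficient of `F(z,u)` is `Σ_{k ≤ m} [q^(m-k)] (P^(k)(z, z + q(y-z)))`, and similarly
for `F(0,u)`. -/
def FuncEq (ρ : ℝ) (P : ℕ → Bzy) : Prop :=
  PowerSeries.C (R := Bzy) Polynomial.X * PowerSeries.mk (fun k => P k) =
    (constHom (1 - (ρ : ℂ)) + constHom (ρ : ℂ) * useries) *
      (PowerSeries.C (R := Bzy) (Polynomial.X - 1) *
          PowerSeries.mk (fun m => ∑ k ∈ Finset.range (m + 1),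
            PowerSeries.coeff (R := Bzy) (m - k) (substY ((P k).coeff 0))) +
        PowerSeries.mk (fun m => ∑ k ∈ Finset.range (m + 1),
          PowerSeries.coeff (R := Bzy) (m - k) (substZY (P k))))

/-- `P^(0)(z,y)` does not depend on `y`. -/
def IndepY (P : ℕ → Bzy) : Prop := ∀ n : ℕ, ∃ c : ℂ, (P 0).coeff n = Polynomial.C c

/-- Boundary conditions: `P^(0)(0,1) = 1 - ρ` and `P^(k)(0,1) = 0` for all `k ≥ 1`. -/
def Boundary (ρ : ℝ) (P : ℕ → Bzy) : Prop :=
  ((P 0).coeff 0).eval 1 = 1 - (ρ : ℂ) ∧ ∀ k : ℕ, 1 ≤ k → ((P k).coeff 0).eval 1 = 0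

/-- Derivative with respect to the inner variable `y`. -/
def dy (p : Bzy) : Bzy :=
  p.sum fun n a => Polynomial.C (Polynomial.derivative a) * Polynomial.X ^ n

/-- The polynomial `P^(k)(0,y) + (P^(k)(z,y) - P^(k)(0,y))/z`, where the quotient is exact
polynomial division by the monic polynomial `z`. -/
def bracket (P : ℕ → Bzy) (k : ℕ) : Bzy :=
  Polynomial.C ((P k).coeff 0) + (P k - Polynomial.C ((P k).coeff 0)) /ₘ Polynomial.X

/-- `a_j^k(z) = ∂_y^j [P^(k)(0,y) + (P^(k)(z,y) - P^(k)(0,y))/z] |_{y=z}`, a polynomial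
in the single variable `z`. -/
def aCoef (P : ℕ → Bzy) (j k : ℕ) : Polynomial ℂ :=
  Polynomial.eval₂ (RingHom.id (Polynomial ℂ)) Polynomial.X ((dy^[j]) (bracket P k))

/-- Reinterpret a polynomial in the single variable `z` as an element of `Bzy`. -/
def embZ : Polynomial ℂ →+* Bzy := Polynomial.mapRingHom (Polynomial.C : ℂ →+* Polynomial ℂ)

/-- `A_j^k(z) = jρ a_{j-1}^{k-j}(z) + (1+ρ(z-1)) a_j^{k-j}(z)` for `1 ≤ j ≤ k`,
`A_0^0(z) = 1 + ρ(z-1)`, and `A_j^k(z) = 0` otherwise. -/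
def Acoef (ρ : ℝ) (P : ℕ → Bzy) (j k : ℕ) : Polynomial ℂ :=
  if 1 ≤ j ∧ j ≤ k then
    (j : Polynomial ℂ) * Polynomial.C (ρ : ℂ) * aCoef P (j - 1) (k - j) +
      (1 + Polynomial.C (ρ : ℂ) * (Polynomial.X - 1)) * aCoef P j (k - j)
  else if j = 0 ∧ k = 0 then 1 + Polynomial.C (ρ : ℂ) * (Polynomial.X - 1)
  else 0

end


/-!
Write `w = y - z`, so that `u = z + q w`. By Taylor's formula around `z`, the coefficient of
`q^i` in `p(z, u)` is `w^i/i! · (∂_y^i p)(z, z)`; together with the identity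
`z · bracket_k = (z - 1) P^(k)(0, y) + P^(k)(z, y)` this makes the coefficient of `q^n` in
`(z - 1) F(0, u) + F(z, u)` equal to `z · N_n` with `N_n = Σ_{j+k=n} w^j a_j^k(z) / j!`.
Comparing coefficients of `q^(m+1)` in the functional equation and cancelling `z` gives
`P^(m+1) = (1 + ρ(z-1)) N_(m+1) + ρ w N_m`, and collecting powers of `w` turns this into
`P^(m+1) = (1 + ρ(z-1)) a_0^(m+1)(z) + Σ_j w^j A_j^(m+1)(z) / j!`.
Setting `y = z` kills every `w^j` and yields `(1 - ρ) a_0^(m+1)(z) = P^(m+1)(0, z)`; setting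
`z = 0` and using the boundary condition `P^(m+1)(0, 1) = 0` yields
`P^(m+1)(0, y) = Σ_j (y^j - 1) A_j^(m+1)(0) / j!`.
-/

open Polynomial Finset

theorem Finset.sum_Icc_one_eq_sum_range {M : Type*} [AddCommMonoid M] (f : ℕ → M) (n : ℕ) :
    ∑ i ∈ Icc 1 n, f i = ∑ i ∈ range n, f (i + 1) := by
  rw [range_eq_Ico, sum_Ico_add', zero_add, Ico_add_one_right_eq_Icc]

namespace Polynomial

section TaylorSeries

variable {R S : Type*} [CommRing R] [CommRing S]

noncomputable def taylorSeries (φ : R[X] →+* S) (w : S) : R[X] →+* PowerSeries S where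
  toFun g := PowerSeries.mk fun i => w ^ i * φ (hasseDeriv i g)
  map_one' := by
    ext (_ | n)
    · simp
    · simp [hasseDeriv_apply_one _ n.succ_pos, PowerSeries.coeff_one]
  map_mul' f g := by
    ext n
    rw [PowerSeries.coeff_mk, PowerSeries.coeff_mul, hasseDeriv_mul, map_sum, mul_sum]
    refine sum_congr rfl fun ij hij => ?_
    rw [HasAntidiagonal.mem_antidiagonal] at hij
    simp only [PowerSeries.coeff_mk, ← hij, pow_add, map_mul]
    ring
  map_zero' := by ext; simp
  map_add' f g := by ext; simp [mul_add]

theorem coeff_taylorSeries (φ : R[X] →+* S) (w : S) (g : R[X]) (i : ℕ) :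
    PowerSeries.coeff i (taylorSeries φ w g) = w ^ i * φ (hasseDeriv i g) :=
  PowerSeries.coeff_mk i fun i => w ^ i * φ (hasseDeriv i g)

theorem eval₂RingHom_C_add_X_mul_C_eq_taylorSeries (φ : R[X] →+* S) (w : S) :
    eval₂RingHom (PowerSeries.C.comp (φ.comp C))
        (PowerSeries.C (φ X) + PowerSeries.X * PowerSeries.C w) = taylorSeries φ w := by
  refine ringHom_ext (fun a => ?_) ?_
  · ext (_ | n)
    · simp [coeff_taylorSeries]
    · simp [coeff_taylorSeries, hasseDeriv_C _ _ n.succ_pos]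
  · ext (_ | _ | n)
    · simp [coeff_taylorSeries]
    · simp [coeff_taylorSeries, PowerSeries.coeff_X]
    · simp [coeff_taylorSeries, hasseDeriv_X _ (by omega : 1 < n + 2), PowerSeries.coeff_X]

end TaylorSeries

theorem hasseDeriv_eq_C_inv_factorial_mul {K : Type*} [Field K] [CharZero K] (k : ℕ)
    (f : K[X]) : hasseDeriv k f = C ((k.factorial : K)⁻¹) * derivative^[k] f := by
  rw [← factorial_smul_hasseDeriv, LinearMap.smul_apply, nsmul_eq_mul, ← mul_assoc,
    ← C_eq_natCast, ← C_mul, inv_mul_cancel₀ (by exact_mod_cast k.factorial_ne_zero), C_1,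
    one_mul]

theorem X_mul_sub_C_coeff_zero_divByMonic_X {R : Type*} [CommRing R] (p : R[X]) :
    X * ((p - C (p.coeff 0)) /ₘ X) = p - C (p.coeff 0) := by
  have h := modByMonic_add_div (p - C (p.coeff 0)) X
  rwa [modByMonic_X, eval_sub, eval_C, ← coeff_zero_eq_eval_zero, sub_self, C_0, zero_add] at h

end Polynomial

@[simp] theorem embZ_C (c : ℂ) : embZ (C c) = cB c := by simp [embZ, cB]

@[simp] theorem embZ_X : embZ X = X := by simp [embZ]

@[simp] theorem eval_X_embZ (q : ℂ[X]) : (embZ q).eval X = q := by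
  simp [embZ, eval_map, eval₂_C_X]

@[simp] theorem eval_zero_embZ (q : ℂ[X]) : (embZ q).eval 0 = C (q.eval 0) := by
  simp [embZ, eval_map, eval₂_at_zero, coeff_zero_eq_eval_zero]

theorem substY_eq_taylorSeries : substY = taylorSeries embZ (yB - X) := by
  have hconst : constHom = PowerSeries.C.comp (embZ.comp C) :=
    RingHom.ext fun c => by simp [constHom, cB]
  rw [← eval₂RingHom_C_add_X_mul_C_eq_taylorSeries, embZ_X, ← hconst]
  rfl

theorem coeff_substY (g : ℂ[X]) (i : ℕ) :
    PowerSeries.coeff i (substY g) = (yB - X) ^ i * embZ (hasseDeriv i g) := by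
  rw [substY_eq_taylorSeries, coeff_taylorSeries]

theorem coeff_dy (p : Bzy) (n : ℕ) : (dy p).coeff n = derivative (p.coeff n) := by
  simp +contextual [dy, Polynomial.sum_def, coeff_C_mul, coeff_X_pow]

theorem coeff_iterate_dy (j : ℕ) (p : Bzy) (n : ℕ) :
    ((dy^[j]) p).coeff n = derivative^[j] (p.coeff n) := by
  induction j with
  | zero => rfl
  | succ j ih => rw [Function.iterate_succ_apply', coeff_dy, ih, Function.iterate_succ_apply']

theorem iterate_dy_add (j : ℕ) (p q : Bzy) : (dy^[j]) (p + q) = (dy^[j]) p + (dy^[j]) q := by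
  ext1 n
  simp only [coeff_add, coeff_iterate_dy, iterate_map_add]

theorem iterate_dy_monomial (j n : ℕ) (a : ℂ[X]) :
    (dy^[j]) (monomial n a) = monomial n (derivative^[j] a) := by
  ext1 m
  simp only [coeff_iterate_dy, coeff_monomial]
  split_ifs
  · rfl
  · exact iterate_map_zero derivative j

theorem coeff_substZY (p : Bzy) (i : ℕ) :
    PowerSeries.coeff i (substZY p) =
      cB ((i.factorial : ℂ)⁻¹) * (yB - X) ^ i * embZ (((dy^[i]) p).eval X) := by
  induction p using Polynomial.induction_on' with
  | add p q hp hq => rw [map_add, map_add, hp, hq, iterate_dy_add, eval_add, map_add, mul_add]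
  | monomial n a =>
    have hsubst : substZY (monomial n a) = substY a * PowerSeries.C (X ^ n) := by
      simp [substZY, eval₂_monomial]
    rw [hsubst, PowerSeries.coeff_mul_C, coeff_substY, iterate_dy_monomial, eval_monomial,
      hasseDeriv_eq_C_inv_factorial_mul]
    simp only [map_mul, map_pow, embZ_C, embZ_X]
    ring

theorem X_mul_bracket (P : ℕ → Bzy) (k : ℕ) :
    X * bracket P k = (X - 1) * C ((P k).coeff 0) + P k := by
  rw [bracket, mul_add, X_mul_sub_C_coeff_zero_divByMonic_X]
  ring

theorem aCoef_zero (P : ℕ → Bzy) (k : ℕ) : aCoef P 0 k = (bracket P k).eval X := rfl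

/-- The coefficient of `q ^ n` in `Σ_k q^k · bracket P k (z, u)`. -/
noncomputable def bracketSubstCoeff (P : ℕ → Bzy) (n : ℕ) : Bzy :=
  ∑ x ∈ antidiagonal n,
    cB ((x.1.factorial : ℂ)⁻¹) * (yB - X) ^ x.1 * embZ (aCoef P x.1 x.2)

theorem sub_one_mul_coeff_substY_add_coeff_substZY (P : ℕ → Bzy) (j k : ℕ) :
    (X - 1) * PowerSeries.coeff j (substY ((P k).coeff 0)) +
        PowerSeries.coeff j (substZY (P k)) =
      X * (cB ((j.factorial : ℂ)⁻¹) * (yB - X) ^ j * embZ (aCoef P j k)) :=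
  calc _ = PowerSeries.coeff j (substZY ((X - 1) * C ((P k).coeff 0) + P k)) := by
        have hX : substZY (X - 1) = PowerSeries.C (X - 1) := by simp [substZY]
        have hC : substZY (C ((P k).coeff 0)) = substY ((P k).coeff 0) := eval₂_C _ _
        rw [map_add, map_mul, hX, hC, map_add, PowerSeries.coeff_C_mul]
    _ = X * PowerSeries.coeff j (substZY (bracket P k)) := by
        rw [← X_mul_bracket]
        simp [substZY, PowerSeries.coeff_C_mul]
    _ = _ := by rw [coeff_substZY]; rfl

theorem coeff_funcEq_bracket (P : ℕ → Bzy) (n : ℕ) :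
    PowerSeries.coeff n
      (PowerSeries.C (R := Bzy) (X - 1) *
          PowerSeries.mk (fun m => ∑ k ∈ range (m + 1),
            PowerSeries.coeff (R := Bzy) (m - k) (substY ((P k).coeff 0))) +
        PowerSeries.mk (fun m => ∑ k ∈ range (m + 1),
          PowerSeries.coeff (R := Bzy) (m - k) (substZY (P k)))) =
      X * bracketSubstCoeff P n := by
  rw [map_add, PowerSeries.coeff_C_mul, PowerSeries.coeff_mk, PowerSeries.coeff_mk,
    mul_sum, ← sum_add_distrib]
  simp only [sub_one_mul_coeff_substY_add_coeff_substZY]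
  rw [← Finset.Nat.sum_antidiagonal_eq_sum_range_succ
      (fun k j => X * (cB ((j.factorial : ℂ)⁻¹) * (yB - X) ^ j * embZ (aCoef P j k))),
    ← Finset.Nat.sum_antidiagonal_swap, bracketSubstCoeff, mul_sum]
  rfl

theorem Acoef_succ (ρ : ℝ) (P : ℕ → Bzy) (i k : ℕ) :
    Acoef ρ P (i + 1) (i + k + 1) =
      ((i + 1 : ℕ) : ℂ[X]) * C (ρ : ℂ) * aCoef P i k +
        (1 + C (ρ : ℂ) * (X - 1)) * aCoef P (i + 1) k := by
  rw [Acoef, if_pos ⟨le_add_self, by omega⟩]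
  simp only [add_tsub_cancel_right, Nat.add_sub_add_right, add_tsub_cancel_left, Nat.cast_add,
    Nat.cast_one]

theorem add_inv_factorial_terms_eq_Acoef (ρ : ℝ) (P : ℕ → Bzy) (w : Bzy) (i k : ℕ) :
    (1 + cB ρ * (X - 1)) *
        (cB (((i + 1).factorial : ℂ)⁻¹) * w ^ (i + 1) * embZ (aCoef P (i + 1) k)) +
      cB ρ * w * (cB ((i.factorial : ℂ)⁻¹) * w ^ i * embZ (aCoef P i k)) =
    cB (((i + 1).factorial : ℂ)⁻¹) * w ^ (i + 1) * embZ (Acoef ρ P (i + 1) (i + k + 1)) := by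
  have hfac : cB ((i.factorial : ℂ)⁻¹) =
      cB (((i + 1).factorial : ℂ)⁻¹) * ((i + 1 : ℕ) : Bzy) := by
    rw [cB, cB, ← map_natCast (C.comp C), RingHom.comp_apply, ← map_mul, ← map_mul]
    congr 2
    rw [Nat.factorial_succ, Nat.cast_mul, mul_inv, mul_comm, ← mul_assoc,
      mul_inv_cancel₀ (Nat.cast_ne_zero.mpr i.succ_ne_zero), one_mul]
  rw [Acoef_succ, hfac]
  simp only [map_add, map_mul, map_natCast, embZ_C, embZ_X, map_one, map_sub]
  ring

namespace FuncEq

variable {ρ : ℝ} {P : ℕ → Bzy}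

theorem succ_eq_bracketSubstCoeff (hF : FuncEq ρ P) (m : ℕ) :
    P (m + 1) = (1 + cB ρ * (X - 1)) * bracketSubstCoeff P (m + 1) +
      cB ρ * (yB - X) * bracketSubstCoeff P m := by
  have hfactor : constHom (1 - ρ) + constHom ρ * useries =
      PowerSeries.C (1 + cB ρ * (X - 1)) + PowerSeries.X * PowerSeries.C (cB ρ * (yB - X)) := by
    simp only [constHom, useries, cB, RingHom.comp_apply, map_sub, map_one, map_add, map_mul]
    ring
  have h := congrArg (PowerSeries.coeff (m + 1)) hF
  rw [hfactor, add_mul, mul_assoc, map_add, PowerSeries.coeff_C_mul,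
    PowerSeries.coeff_succ_X_mul, PowerSeries.coeff_C_mul, PowerSeries.coeff_C_mul,
    PowerSeries.coeff_mk, coeff_funcEq_bracket, coeff_funcEq_bracket] at h
  apply mul_left_cancel₀ (X_ne_zero : (X : Bzy) ≠ 0)
  linear_combination h

theorem succ_eq_sum_Acoef (hF : FuncEq ρ P) (m : ℕ) :
    P (m + 1) = (1 + cB ρ * (X - 1)) * embZ (aCoef P 0 (m + 1)) +
      ∑ j ∈ Icc 1 (m + 1),
        cB ((j.factorial : ℂ)⁻¹) * (yB - X) ^ j * embZ (Acoef ρ P j (m + 1)) := by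
  rw [hF.succ_eq_bracketSubstCoeff, bracketSubstCoeff, bracketSubstCoeff,
    Finset.Nat.sum_antidiagonal_succ, sum_Icc_one_eq_sum_range]
  simp only [Finset.Nat.sum_antidiagonal_eq_sum_range_succ_mk]
  rw [mul_add, mul_sum, mul_sum, add_assoc, ← sum_add_distrib]
  congr 1
  · simp [cB]
  · refine sum_congr rfl fun i hi => ?_
    have him : m = i + (m - i) := by have := mem_range.mp hi; omega
    rw [add_inv_factorial_terms_eq_Acoef, ← him]

theorem eval_X_succ (hF : FuncEq ρ P) (m : ℕ) :
    (P (m + 1)).eval X = (1 + C (ρ : ℂ) * (X - 1)) * aCoef P 0 (m + 1) := by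
  rw [hF.succ_eq_sum_Acoef, eval_add, eval_finsetSum, sum_eq_zero fun j hj => ?_]
  · simp [cB]
  · have hj0 : j ≠ 0 := Nat.one_le_iff_ne_zero.mp (mem_Icc.mp hj).1
    simp [yB, hj0]

theorem C_one_sub_mul_aCoef_zero (hF : FuncEq ρ P) (m : ℕ) :
    C (1 - ρ : ℂ) * aCoef P 0 (m + 1) = (P (m + 1)).coeff 0 := by
  have h := congrArg (eval X) (X_mul_bracket P (m + 1))
  rw [eval_mul, eval_X, ← aCoef_zero, eval_add, eval_mul, eval_sub, eval_X, eval_one, eval_C,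
    hF.eval_X_succ] at h
  apply mul_left_cancel₀ (X_sub_C_ne_zero (1 : ℂ))
  rw [C_1, map_sub, C_1]
  linear_combination h

theorem coeff_zero_succ (hF : FuncEq ρ P) (hB : Boundary ρ P) (m : ℕ) :
    (P (m + 1)).coeff 0 = ∑ j ∈ Icc 1 (m + 1),
      C ((j.factorial : ℂ)⁻¹ * (Acoef ρ P j (m + 1)).eval 0) * (X ^ j - 1) := by
  have hP0 : (P (m + 1)).coeff 0 = C ((1 - ρ) * (aCoef P 0 (m + 1)).eval 0) +
      ∑ j ∈ Icc 1 (m + 1),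
        C ((j.factorial : ℂ)⁻¹ * (Acoef ρ P j (m + 1)).eval 0) * X ^ j := by
    rw [coeff_zero_eq_eval_zero, hF.succ_eq_sum_Acoef]
    simp [cB, yB, eval_finsetSum, sub_eq_add_neg]
  have hsum : (1 - ρ) * (aCoef P 0 (m + 1)).eval 0 =
      -∑ j ∈ Icc 1 (m + 1), (j.factorial : ℂ)⁻¹ * (Acoef ρ P j (m + 1)).eval 0 := by
    have h1 := congrArg (eval 1) hP0
    rw [hB.2 (m + 1) m.succ_pos] at h1
    simp [eval_finsetSum] at h1
    linear_combination -h1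
  rw [hP0, hsum, map_neg, map_sum]
  simp only [mul_sub, mul_one, sum_sub_distrib]
  ring

end FuncEq

theorem stmt10_general (ρ : ℝ) (hρ : ρ ∈ Set.Ioo (0 : ℝ) 1) (P : ℕ → Bzy)
    (hF : FuncEq ρ P) (hB : Boundary ρ P) :
    ∀ k : ℕ, 1 ≤ k →
      P k = ∑ j ∈ Finset.Icc 1 k,
        (cB ((j.factorial : ℂ)⁻¹) * (yB - Polynomial.X) ^ j * embZ (Acoef ρ P j k) +
          (1 + cB (ρ : ℂ) * (Polynomial.X - 1)) *
            cB ((1 - (ρ : ℂ))⁻¹ * (j.factorial : ℂ)⁻¹ * (Acoef ρ P j k).eval 0) *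
            (Polynomial.X ^ j - 1)) := by
  intro k hk
  obtain ⟨m, rfl⟩ := Nat.exists_eq_add_of_le' hk
  have hρ1 : (1 - ρ : ℂ) ≠ 0 := sub_ne_zero.mpr (by exact_mod_cast hρ.2.ne')
  have ha0 : aCoef P 0 (m + 1) = C ((1 - ρ : ℂ)⁻¹) * (P (m + 1)).coeff 0 := by
    rw [← hF.C_one_sub_mul_aCoef_zero, ← mul_assoc, ← C_mul, inv_mul_cancel₀ hρ1, C_1,
      one_mul]
  rw [sum_add_distrib, hF.succ_eq_sum_Acoef, ha0, hF.coeff_zero_succ hB,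
    add_comm (_ * embZ _), map_mul, embZ_C, map_sum, mul_sum, mul_sum]
  refine congrArg (_ + ·) (sum_congr rfl fun j _ => ?_)
  simp only [map_mul, map_sub, map_pow, map_one, embZ_C, embZ_X, cB]
  ring

theorem stmt10 (ρ : ℝ) (hρ : ρ ∈ Set.Ioo (0 : ℝ) 1) (P : ℕ → Bzy)
    (hF : FuncEq ρ P) (hI : IndepY P) (hB : Boundary ρ P) :
    ∀ k : ℕ, 1 ≤ k →
      P k = ∑ j ∈ Finset.Icc 1 k,
        (cB ((j.factorial : ℂ)⁻¹) * (yB - Polynomial.X) ^ j * embZ (Acoef ρ P j k) +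
          (1 + cB (ρ : ℂ) * (Polynomial.X - 1)) *
            cB ((1 - (ρ : ℂ))⁻¹ * (j.factorial : ℂ)⁻¹ * (Acoef ρ P j k).eval 0) *
            (Polynomial.X ^ j - 1)) :=
  stmt10_general ρ hρ P hF hB
end
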